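/- arXiv:1502.00716 — 5 statements merged into one kernel-verified Lean document; each statement's English description precedes it below -/
import Mathlib

section
/- Let G be a finite simple graph, let ρ be a vertex of G, and let C be a subset of the vertices of G with ρ ∈ C. Then the number of consistent cuts of the induced subgraph G[C] equals 2^(cc(G[C]) − 1), where cc(G[C]) denotes the number of connected components of G[C]. -/
/-- `(C1, C2)` is a consistent cut of the induced subgraph `G[C]` (with root `ρ`):
`C1` and `C2` are disjoint, their union is `C`, `ρ ∈ C1`, and no edge of `G`
joins a vertex of `C1` to a vertex of `C2`. -/
def IsConsistentCut {V : Type*} (G : SimpleGraph V) (ρ : V) (C C1 C2 : Set V) : Prop :=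
  Disjoint C1 C2 ∧ C1 ∪ C2 = C ∧ ρ ∈ C1 ∧ ∀ u ∈ C1, ∀ v ∈ C2, ¬ G.Adj u v

private lemma cut_reachable {V : Type*} {G : SimpleGraph V} {ρ : V} {C C1 C2 : Set V}
    (h : IsConsistentCut G ρ C C1 C2) {u v : C}
    (hr : (G.induce C).Reachable u v) : (u : V) ∈ C2 ↔ (v : V) ∈ C2 := by
  obtain ⟨hd, hu, hρ, he⟩ := h
  obtain ⟨w⟩ := hr
  induction w with
  | nil => rfl
  | cons ha _ ih =>
    rename_i a b c _
    refine Iff.trans ?_ ih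
    have hadj : G.Adj (a : V) (b : V) := ha
    have haC : (a : V) ∈ C1 ∪ C2 := hu ▸ a.2
    have hbC : (b : V) ∈ C1 ∪ C2 := hu ▸ b.2
    constructor
    · intro h2
      rcases hbC with h1 | h2' ; · exact absurd hadj.symm (he _ h1 _ h2)
      exact h2'
    · intro h2
      rcases haC with h1 | h2' ; · exact absurd hadj (he _ h1 _ h2)
      exact h2'

/-- The number of consistent cuts of `G[C]` equals `2 ^ (cc(G[C]) - 1)`. -/
theorem num_consistent_cuts_eq_two_pow {V : Type*} [Fintype V]
    (G : SimpleGraph V) (ρ : V) (C : Set V) (hρ : ρ ∈ C) :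
    Nat.card {p : Set V × Set V // IsConsistentCut G ρ C p.1 p.2} =
      2 ^ (Nat.card (G.induce C).ConnectedComponent - 1) := by
  classical
  set H := G.induce C with hH
  set K0 : H.ConnectedComponent := H.connectedComponentMk ⟨ρ, hρ⟩ with hK0
  -- Equivalence with sets of components not containing ρ's component
  have e : {p : Set V × Set V // IsConsistentCut G ρ C p.1 p.2} ≃
      {S : Set H.ConnectedComponent // K0 ∉ S} := by
    refine
      { toFun := fun p => ⟨{K | ∀ w : C, H.connectedComponentMk w = K → (w : V) ∈ p.1.2}, ?_⟩
        invFun := fun S =>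
          ⟨({v | ∃ h : v ∈ C, H.connectedComponentMk ⟨v, h⟩ ∉ S.1},
            {v | ∃ h : v ∈ C, H.connectedComponentMk ⟨v, h⟩ ∈ S.1}), ?_, ?_, ?_, ?_⟩
        left_inv := ?_
        right_inv := ?_ }
    · -- K0 not in image set
      intro hmem
      have := hmem ⟨ρ, hρ⟩ rfl
      exact absurd (p.2.1.le_bot ⟨p.2.2.2.1, this⟩) (fun h => h)
    · -- disjoint
      rw [Set.disjoint_left]
      rintro v ⟨h1, h2⟩ ⟨h1', h2'⟩
      exact h2 h2'
    · -- union
      ext v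
      simp only [Set.mem_union, Set.mem_setOf_eq]
      constructor
      · rintro (⟨h, _⟩ | ⟨h, _⟩) <;> exact h
      · intro hv
        by_cases hc : H.connectedComponentMk ⟨v, hv⟩ ∈ S.1
        · exact Or.inr ⟨hv, hc⟩
        · exact Or.inl ⟨hv, hc⟩
    · exact ⟨hρ, S.2⟩
    · -- no crossing edges
      rintro u ⟨hu, hu2⟩ v ⟨hv, hv2⟩ hadj
      have : H.Adj ⟨u, hu⟩ ⟨v, hv⟩ := hadj
      have := SimpleGraph.ConnectedComponent.connectedComponentMk_eq_of_adj this
      rw [this] at hu2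
      exact hu2 hv2
    · -- left inverse
      rintro ⟨⟨C1, C2⟩, hcut⟩
      obtain ⟨hd, hu, hρ1, he⟩ := hcut
      have hC2 : ∀ v (h : v ∈ C), (v ∈ C2 ↔
          ∀ w : C, H.connectedComponentMk w = H.connectedComponentMk ⟨v, h⟩ →
            (w : V) ∈ C2) := by
        intro v h
        constructor
        · intro hv w hw
          have hr : H.Reachable w ⟨v, h⟩ := SimpleGraph.ConnectedComponent.exact hw
          exact (cut_reachable ⟨hd, hu, hρ1, he⟩ hr).mpr hv
        · intro hw
          exact hw ⟨v, h⟩ rfl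
      ext v
      · simp only [Set.mem_setOf_eq]
        constructor
        · rintro ⟨h, hns⟩
          have : v ∉ C2 := fun hv => hns ((hC2 v h).mp hv)
          have h2 : v ∈ C1 ∪ C2 := hu ▸ h
          rcases h2 with h2 | h2
          · exact h2
          · exact absurd h2 this
        · intro hv
          have h : v ∈ C := hu ▸ Set.mem_union_left _ hv
          refine ⟨h, fun hs => ?_⟩
          have : v ∈ C2 := hs ⟨v, h⟩ rfl
          exact absurd (hd.le_bot ⟨hv, this⟩) (fun h => h)
      · simp only [Set.mem_setOf_eq]
        constructor
        · rintro ⟨h, hs⟩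
          exact (hC2 v h).mpr hs
        · intro hv
          have h : v ∈ C := hu ▸ Set.mem_union_right _ hv
          exact ⟨h, (hC2 v h).mp hv⟩
    · -- right inverse
      rintro ⟨S, hS⟩
      ext K
      simp only [Set.mem_setOf_eq]
      induction K using SimpleGraph.ConnectedComponent.ind with
      | _ w0 =>
        constructor
        · intro hmem
          obtain ⟨h, hs⟩ := hmem w0 rfl
          convert hs
        · intro hK w hw
          refine ⟨w.2, ?_⟩
          have : H.connectedComponentMk w = H.connectedComponentMk w0 := hw
          simpa [this] using hK
  rw [Nat.card_congr e]
  have : Finite C := Subtype.finite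
  have : Fintype H.ConnectedComponent := Fintype.ofFinite _
  have e2 : {S : Set H.ConnectedComponent // K0 ∉ S} ≃
      Set {K : H.ConnectedComponent // K ≠ K0} := by
    refine
      { toFun := fun S => {K | K.1 ∈ S.1}
        invFun := fun T => ⟨{K | ∃ h : K ≠ K0, ⟨K, h⟩ ∈ T}, ?_⟩
        left_inv := ?_
        right_inv := ?_ }
    · rintro ⟨h, _⟩; exact h rfl
    · rintro ⟨S, hS⟩
      ext K
      simp only [Set.mem_setOf_eq]
      constructor
      · rintro ⟨h, hm⟩; exact hm
      · intro hK
        have : K ≠ K0 := fun h => hS (h ▸ hK)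
        exact ⟨this, hK⟩
    · intro T
      ext ⟨K, hK⟩
      simp only [Set.mem_setOf_eq]
      constructor
      · rintro ⟨h, hm⟩; exact hm
      · intro h; exact ⟨hK, h⟩
  rw [Nat.card_congr e2, Nat.card_eq_fintype_card, Fintype.card_set]
  congr 1
  rw [Nat.card_eq_fintype_card]
  have : Fintype.card {K : H.ConnectedComponent // K ≠ K0} =
      Fintype.card H.ConnectedComponent - Fintype.card {K // K = K0} :=
    Fintype.card_subtype_compl _
  rw [this, Fintype.card_subtype_eq]
end

section
/- Let G be a finite simple graph, let ρ be a vertex of G, and let C be a subset of the vertices of G with ρ ∈ C. The number of consistent cuts of G[C] is odd if and only if the induced subgraph G[C] is connected; moreover, in that case the number of consistent cuts is exactly 1, namely the cut (C, ∅). -/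
/-!
If `G[C]` is connected, membership in `C1` spreads along edges from `ρ` to all of `C`, so `(C, ∅)`
is the only cut. Otherwise the vertices of `C` not reachable from `ρ` form the right side `D` of a
cut, and `(C1, C2) ↦ (C1 ∆ D, C2 ∆ D)` is a fixed-point-free involution on the cuts, so there is
an even number of them (possibly infinitely many, counted as `0`).
-/

theorem Function.Involutive.even_natCard {α : Type*} {f : α → α} (hf : Function.Involutive f)
    (hfix : ∀ a, f a ≠ a) : Even (Nat.card α) := by
  classical
  cases finite_or_infinite α
  · have := Fintype.ofFinite α
    let g : Function.End α := f
    have hsq : g ^ 2 ^ 1 = 1 := funext hf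
    have hnofix : Function.fixedPoints g = ∅ := Set.eq_empty_of_forall_notMem hfix
    have hmod := Equiv.Perm.card_fixedPoints_modEq (p := 2) hsq
    rw [Nat.card_eq_fintype_card, Nat.even_iff]
    simpa [hnofix, Nat.ModEq] using hmod
  · simp [Nat.card_eq_zero_of_infinite]

namespace IsConsistentCut

variable {V : Type*} {G : SimpleGraph V} {ρ : V} {C C1 C2 D1 D2 : Set V}

theorem mem_left_of_reachable (h : IsConsistentCut G ρ C C1 C2) {u v : C}
    (huv : (G.induce C).Reachable u v) (hu : (u : V) ∈ C1) : (v : V) ∈ C1 := by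
  obtain ⟨p⟩ := huv
  induction p with
  | nil => exact hu
  | @cons a b _ hab _ ih =>
    refine ih ?_
    have hb : (b : V) ∈ C1 ∪ C2 := h.2.1 ▸ b.2
    exact hb.resolve_right fun hb2 => h.2.2.2 a hu b hb2 hab

theorem eq_of_connected (h : IsConsistentCut G ρ C C1 C2) (hρ : ρ ∈ C)
    (hc : (G.induce C).Connected) : C1 = C ∧ C2 = ∅ := by
  have hC2 : C2 = ∅ := Set.eq_empty_of_forall_notMem fun v hv => by
    have hvC : v ∈ C := h.2.1 ▸ Or.inr hv
    have hv1 := h.mem_left_of_reachable (hc.preconnected ⟨ρ, hρ⟩ ⟨v, hvC⟩) h.2.2.1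
    exact h.1.notMem_of_mem_left hv1 hv
  exact ⟨by rw [← h.2.1, hC2, Set.union_empty], hC2⟩

/-- `D2` is a union of components of `G[C]` avoiding `ρ`, so it can be moved across any cut. -/
theorem symmDiff (h : IsConsistentCut G ρ C C1 C2) (hD : IsConsistentCut G ρ C D1 D2) :
    IsConsistentCut G ρ C (symmDiff C1 D2) (symmDiff C2 D2) := by
  obtain ⟨hdisj, hunion, hρ, hadj⟩ := h
  obtain ⟨hDdisj, hDunion, hDρ, hDadj⟩ := hD
  rw [Set.disjoint_left] at hdisj hDdisj
  rw [Set.ext_iff] at hunion hDunion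
  refine ⟨Set.disjoint_left.2 fun v => ?_, Set.ext fun v => ?_, ?_, fun u hu v hv huv => ?_⟩
  · have := hunion v; have := hDunion v
    grind
  · grind
  · exact Or.inl ⟨hρ, hDdisj hDρ⟩
  · have := hunion u; have := hunion v; have := hDunion u; have := hDunion v
    grind [G.adj_symm huv]

end IsConsistentCut

section

variable {V : Type*} {G : SimpleGraph V} {ρ : V} {C D1 D2 : Set V}

theorem exists_isConsistentCut_nonempty_of_not_connected (hρ : ρ ∈ C)
    (hc : ¬ (G.induce C).Connected) :
    ∃ D1 D2 : Set V, IsConsistentCut G ρ C D1 D2 ∧ D2.Nonempty := by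
  set R : Set V := {v | ∃ hv : v ∈ C, (G.induce C).Reachable ⟨ρ, hρ⟩ ⟨v, hv⟩}
  have hRC : R ⊆ C := fun v hv => hv.1
  refine ⟨R, C \ R, ⟨Set.disjoint_sdiff_right, Set.union_sdiff_cancel hRC, ⟨hρ, .rfl⟩, ?_⟩, ?_⟩
  · rintro u ⟨huC, hu⟩ v ⟨hvC, hvR⟩ huv
    exact hvR ⟨hvC, hu.trans (SimpleGraph.Adj.reachable (G := G.induce C) huv)⟩
  · by_contra hempty
    refine hc ((SimpleGraph.connected_iff_exists_forall_reachable _).2 ⟨⟨ρ, hρ⟩, fun v => ?_⟩)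
    have hvR : (v : V) ∈ R := by_contra fun hvR => hempty ⟨v, v.2, hvR⟩
    exact hvR.2

theorem even_natCard_isConsistentCut (hD : IsConsistentCut G ρ C D1 D2) (hne : D2.Nonempty) :
    Even (Nat.card {p : Set V × Set V // IsConsistentCut G ρ C p.1 p.2}) := by
  let toggle (p : {p : Set V × Set V // IsConsistentCut G ρ C p.1 p.2}) :
      {p : Set V × Set V // IsConsistentCut G ρ C p.1 p.2} :=
    ⟨(symmDiff p.1.1 D2, symmDiff p.1.2 D2), p.2.symmDiff hD⟩
  refine Function.Involutive.even_natCard (f := toggle) (fun p => ?_) fun p hp => ?_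
  · exact Subtype.ext (Prod.ext (symmDiff_symmDiff_cancel_right _ _)
      (symmDiff_symmDiff_cancel_right _ _))
  · have h1 : symmDiff p.1.1 D2 = p.1.1 := congrArg (·.1.1) hp
    exact hne.ne_empty (symmDiff_eq_left.1 h1)

end

theorem odd_num_consistent_cuts_iff_connected_general {V : Type*}
    (G : SimpleGraph V) (ρ : V) (C : Set V) (hρ : ρ ∈ C) :
    (Odd (Nat.card {p : Set V × Set V // IsConsistentCut G ρ C p.1 p.2}) ↔
      (G.induce C).Connected) ∧
    ((G.induce C).Connected →
      Nat.card {p : Set V × Set V // IsConsistentCut G ρ C p.1 p.2} = 1 ∧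
      IsConsistentCut G ρ C C ∅ ∧
      ∀ C1 C2 : Set V, IsConsistentCut G ρ C C1 C2 → C1 = C ∧ C2 = ∅) := by
  have htrivial : IsConsistentCut G ρ C C ∅ :=
    ⟨Set.disjoint_empty C, Set.union_empty C, hρ, fun _ _ _ hv => hv.elim⟩
  have hcard (hc : (G.induce C).Connected) :
      Nat.card {p : Set V × Set V // IsConsistentCut G ρ C p.1 p.2} = 1 := by
    refine Nat.card_eq_one_iff_exists.2 ⟨⟨(C, ∅), htrivial⟩, fun p => ?_⟩
    obtain ⟨h1, h2⟩ := p.2.eq_of_connected hρ hc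
    exact Subtype.ext (Prod.ext h1 h2)
  refine ⟨⟨fun hodd => ?_, fun hc => hcard hc ▸ odd_one⟩,
    fun hc => ⟨hcard hc, htrivial, fun _ _ h => h.eq_of_connected hρ hc⟩⟩
  by_contra hc
  obtain ⟨D1, D2, hD, hne⟩ := exists_isConsistentCut_nonempty_of_not_connected hρ hc
  exact Nat.not_even_iff_odd.2 hodd (even_natCard_isConsistentCut hD hne)

/-- The number of consistent cuts of `G[C]` is odd iff `G[C]` is connected; moreover,
in that case the number of consistent cuts is exactly `1`, namely the cut `(C, ∅)`. -/
theorem odd_num_consistent_cuts_iff_connected {V : Type*} [Fintype V]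
    (G : SimpleGraph V) (ρ : V) (C : Set V) (hρ : ρ ∈ C) :
    (Odd (Nat.card {p : Set V × Set V // IsConsistentCut G ρ C p.1 p.2}) ↔
      (G.induce C).Connected) ∧
    ((G.induce C).Connected →
      Nat.card {p : Set V × Set V // IsConsistentCut G ρ C p.1 p.2} = 1 ∧
      IsConsistentCut G ρ C C ∅ ∧
      ∀ C1 C2 : Set V, IsConsistentCut G ρ C C1 C2 → C1 = C ∧ C2 = ∅) :=
  odd_num_consistent_cuts_iff_connected_general G ρ C hρ
end

section
/- (Isolation Lemma) Let U be a finite set, let N be a positive integer, and let F be a nonempty family of subsets of U. For a function ω : U → {1, 2, …, N} and S ⊆ U write ω(S) = ∑_{x ∈ S} ω(x), and say that ω isolates F if there is a unique set in F of minimum weight ω(S). Then the number of functions ω : U → {1, 2, …, N} that do not isolate F is at most |U| · N^(|U| − 1); equivalently, if ω is chosen uniformly at random among all functions U → {1, …, N}, then the probability that ω isolates F is at least 1 − |U|/N. -/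
private def wt {U : Type*} [DecidableEq U] (ω : U → ℕ) (S : Finset U) : ℕ :=
  ∑ x ∈ S, ω x

private lemma amb_exists {U : Type*} [DecidableEq U] (F : Finset (Finset U))
    (hF : F.Nonempty) (ω : U → ℕ)
    (hbad : ¬ ∃! S : Finset U, S ∈ F ∧ ∀ T ∈ F, wt ω S ≤ wt ω T) :
    ∃ x : U, (∃ A ∈ F, x ∈ A ∧ ∀ T ∈ F, wt ω A ≤ wt ω T) ∧
             (∃ B ∈ F, x ∉ B ∧ ∀ T ∈ F, wt ω B ≤ wt ω T) := by
  obtain ⟨S₀, hS₀F, hS₀min⟩ := F.exists_min_image (wt ω) hF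
  have hT : ∃ T : Finset U, (T ∈ F ∧ ∀ T' ∈ F, wt ω T ≤ wt ω T') ∧ T ≠ S₀ := by
    by_contra h
    push_neg at h
    exact hbad ⟨S₀, ⟨hS₀F, hS₀min⟩, fun T hT => h T hT⟩
  obtain ⟨T, ⟨hTF, hTmin⟩, hne⟩ := hT
  have hsub : ¬ T ⊆ S₀ ∨ ¬ S₀ ⊆ T := by
    by_contra h
    push_neg at h
    exact hne (Finset.Subset.antisymm h.1 h.2)
  rcases hsub with h | h
  · obtain ⟨x, hxT, hxS⟩ := Finset.not_subset.mp h
    exact ⟨x, ⟨T, hTF, hxT, hTmin⟩, ⟨S₀, hS₀F, hxS, hS₀min⟩⟩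
  · obtain ⟨x, hxS, hxT⟩ := Finset.not_subset.mp h
    exact ⟨x, ⟨S₀, hS₀F, hxS, hS₀min⟩, ⟨T, hTF, hxT, hTmin⟩⟩

private lemma amb_value {U : Type*} [DecidableEq U] (F : Finset (Finset U)) (x : U)
    (ω ω' : U → ℕ) (hagree : ∀ y : U, y ≠ x → ω y = ω' y)
    (h1 : (∃ A ∈ F, x ∈ A ∧ ∀ T ∈ F, wt ω A ≤ wt ω T) ∧
          (∃ B ∈ F, x ∉ B ∧ ∀ T ∈ F, wt ω B ≤ wt ω T))
    (h2 : (∃ A ∈ F, x ∈ A ∧ ∀ T ∈ F, wt ω' A ≤ wt ω' T) ∧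
          (∃ B ∈ F, x ∉ B ∧ ∀ T ∈ F, wt ω' B ≤ wt ω' T)) :
    ω x = ω' x := by
  obtain ⟨⟨A, hAF, hxA, hAmin⟩, ⟨B, hBF, hxB, hBmin⟩⟩ := h1
  obtain ⟨⟨A', hA'F, hxA', hA'min⟩, ⟨B', hB'F, hxB', hB'min⟩⟩ := h2
  have same : ∀ S : Finset U, x ∉ S → wt ω S = wt ω' S := fun S hS =>
    Finset.sum_congr rfl fun y hy => hagree y (fun h => hS (h ▸ hy))
  have erase_same : ∀ S : Finset U, wt ω (S.erase x) = wt ω' (S.erase x) :=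
    fun S => same _ (Finset.notMem_erase x S)
  have split : ∀ (f : U → ℕ) (S : Finset U), x ∈ S →
      wt f S = f x + wt f (S.erase x) :=
    fun f S hS => (Finset.add_sum_erase S f hS).symm
  have e1 : wt ω A = ω x + wt ω (A.erase x) := split ω A hxA
  have e2 : wt ω A' = ω x + wt ω (A'.erase x) := split ω A' hxA'
  have e3 : wt ω' A' = ω' x + wt ω' (A'.erase x) := split ω' A' hxA'
  have e4 : wt ω' A = ω' x + wt ω' (A.erase x) := split ω' A hxA
  have esA := erase_same A
  have esA' := erase_same A'
  have l1 : wt ω A ≤ wt ω A' := hAmin A' hA'F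
  have l2 : wt ω' A' ≤ wt ω' A := hA'min A hAF
  have m1 : wt ω A ≤ wt ω B := hAmin B hBF
  have m2 : wt ω B ≤ wt ω A := hBmin A hAF
  have m3 : wt ω' A' ≤ wt ω' B' := hA'min B' hB'F
  have m4 : wt ω' B' ≤ wt ω' A' := hB'min A' hA'F
  have m5 : wt ω B ≤ wt ω B' := hBmin B' hB'F
  have m6 : wt ω' B' ≤ wt ω' B := hB'min B hBF
  have s1 : wt ω B = wt ω' B := same B hxB
  have s2 : wt ω B' = wt ω' B' := same B' hxB'
  omega

/-- **Isolation Lemma.** Let `F` be a nonempty family of subsets of a finite set `U` and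
let `N > 0`. The number of weight functions `ω : U → {1, …, N}` that do not isolate `F`
(i.e. for which there is no unique member of `F` of minimum total weight) is at most
`|U| · N ^ (|U| - 1)`. -/
theorem isolation_lemma {U : Type*} [Fintype U] [DecidableEq U] (N : ℕ) (hN : 0 < N)
    (F : Finset (Finset U)) (hF : F.Nonempty) :
    Nat.card {ω : U → {m : ℕ // 1 ≤ m ∧ m ≤ N} //
        ¬ ∃! S : Finset U, S ∈ F ∧
            ∀ T ∈ F, (∑ x ∈ S, (ω x : ℕ)) ≤ ∑ x ∈ T, (ω x : ℕ)} ≤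
      Fintype.card U * N ^ (Fintype.card U - 1) := by
  classical
  have eW : {m : ℕ // 1 ≤ m ∧ m ≤ N} ≃ Fin N :=
    { toFun := fun w => ⟨w.1 - 1, by have := w.2; omega⟩
      invFun := fun i => ⟨i.1 + 1, by have := i.2; omega⟩
      left_inv := fun w => Subtype.ext (by have := w.2; simp; omega)
      right_inv := fun i => Fin.ext (by simp) }
  haveI : Fintype {m : ℕ // 1 ≤ m ∧ m ≤ N} := Fintype.ofEquiv _ eW.symm
  have hcardW : Fintype.card {m : ℕ // 1 ≤ m ∧ m ≤ N} = N := by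
    rw [Fintype.card_congr eW, Fintype.card_fin]
  set Bad := {ω : U → {m : ℕ // 1 ≤ m ∧ m ≤ N} //
        ¬ ∃! S : Finset U, S ∈ F ∧
            ∀ T ∈ F, (∑ x ∈ S, (ω x : ℕ)) ≤ ∑ x ∈ T, (ω x : ℕ)} with hBad
  have key : ∀ ω : Bad, ∃ x : U,
      (∃ A ∈ F, x ∈ A ∧ ∀ T ∈ F, wt (fun u => (ω.1 u : ℕ)) A ≤ wt (fun u => (ω.1 u : ℕ)) T) ∧
      (∃ B ∈ F, x ∉ B ∧ ∀ T ∈ F, wt (fun u => (ω.1 u : ℕ)) B ≤ wt (fun u => (ω.1 u : ℕ)) T) :=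
    fun ω => amb_exists F hF (fun u => (ω.1 u : ℕ)) ω.2
  let f : Bad → Σ x : U, ({y : U // y ≠ x} → {m : ℕ // 1 ≤ m ∧ m ≤ N}) :=
    fun ω => ⟨Classical.choose (key ω), fun y => ω.1 y.1⟩
  have finj : Function.Injective f := by
    intro ω ω' h
    have hx : Classical.choose (key ω) = Classical.choose (key ω') :=
      congrArg Sigma.fst h
    have hagree : ∀ y : U, y ≠ Classical.choose (key ω) → ω.1 y = ω'.1 y := by
      intro y hy
      have h1 := congrArg
        (fun p : Σ x : U, ({z : U // z ≠ x} → {m : ℕ // 1 ≤ m ∧ m ≤ N}) =>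
          if hyx : y ≠ p.1 then p.2 ⟨y, hyx⟩ else ω.1 y) h
      simp only [f] at h1
      rw [dif_pos hy, dif_pos (hx ▸ hy)] at h1
      exact h1
    have hxval : (ω.1 (Classical.choose (key ω)) : ℕ) =
        (ω'.1 (Classical.choose (key ω)) : ℕ) := by
      apply amb_value F (Classical.choose (key ω)) (fun u => (ω.1 u : ℕ))
        (fun u => (ω'.1 u : ℕ))
      · intro y hy; exact congrArg _ (hagree y hy)
      · exact Classical.choose_spec (key ω)
      · rw [hx]; exact Classical.choose_spec (key ω')
    apply Subtype.ext
    funext u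
    by_cases hu : u = Classical.choose (key ω)
    · subst hu; exact Subtype.ext hxval
    · exact hagree u hu
  have hle := Nat.card_le_card_of_injective f finj
  have hcard : Nat.card (Σ x : U, ({y : U // y ≠ x} → {m : ℕ // 1 ≤ m ∧ m ≤ N})) =
      Fintype.card U * N ^ (Fintype.card U - 1) := by
    rw [Nat.card_eq_fintype_card, Fintype.card_sigma]
    have hpt : ∀ x : U,
        Fintype.card ({y : U // y ≠ x} → {m : ℕ // 1 ≤ m ∧ m ≤ N}) =
          N ^ (Fintype.card U - 1) := by
      intro x
      rw [Fintype.card_fun, hcardW]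
      congr 1
      have : Fintype.card {y : U // y ≠ x} = Fintype.card U - Fintype.card {y : U // y = x} :=
        Fintype.card_subtype_compl _
      rw [this, Fintype.card_subtype_eq]
    simp only [hpt]
    rw [Finset.sum_const, Finset.card_univ, smul_eq_mul]
  rw [← hcard]
  exact hle
end

section
/- Let G be a finite simple graph with n ≥ 1 vertices and vertex set V, let ρ ∈ V, and let r ≥ 1 and k ≥ 1 be natural numbers. Suppose G has at least one r-dominating set C of size k with ρ ∈ C such that G[C] is connected. Then the number of weight functions ω : V → {1, 2, …, 2n} for which there exists an integer W such that exactly one set C ⊆ V satisfies ρ ∈ C, |C| = k, ω(C) = W, C is an r-dominating set of G and G[C] is connected, is at least (1/2)·(2n)^n. Equivalently, for ω chosen uniformly at random among functions V → {1, …, 2n}, with probability at least 1/2 there exists W such that the number of connected r-dominating sets of size k containing ρ and of weight W is exactly one (in particular, odd). -/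
private lemma final_arith : ∀ g B T K : ℕ, g + B = T → B ≤ K → T = 2 * K → T ≤ 2 * g := by
  intro g B T K h1 h2 h3; omega

theorem isolation_aux {V : Type*} [Fintype V] [DecidableEq V]
    (P : Finset V → Prop) (hP : ∃ C, P C) (hn : 1 ≤ Fintype.card V) :
    (2 * Fintype.card V) ^ Fintype.card V ≤
      2 * Nat.card {ω : V → {m : ℕ // 1 ≤ m ∧ m ≤ 2 * Fintype.card V} //
        ∃ W : ℕ, ∃! C : Finset V, P C ∧ (∑ v ∈ C, (ω v : ℕ)) = W} := by
  classical
  set n := Fintype.card V with hn_def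
  set Wt := {m : ℕ // 1 ≤ m ∧ m ≤ 2 * n} with hWt_def
  let e : Fin (2 * n) ≃ Wt :=
    { toFun := fun i => ⟨i.1 + 1, by have := i.2; omega⟩
      invFun := fun m => ⟨m.1 - 1, by have := m.2; omega⟩
      left_inv := fun i => by ext; simp
      right_inv := fun m => by ext; have := m.2.1; simp; omega }
  haveI : Fintype Wt := Fintype.ofEquiv _ e
  have hWtcard : Fintype.card Wt = 2 * n := by
    rw [← Fintype.card_fin (2 * n)]
    exact (Fintype.card_congr e).symm
  let wt : (V → Wt) → Finset V → ℕ := fun ω C => ∑ v ∈ C, (ω v : ℕ)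
  let F : Finset (Finset V) := Finset.univ.filter P
  obtain ⟨C₀, hC₀⟩ := hP
  have hF : F.Nonempty := ⟨C₀, Finset.mem_filter.mpr ⟨Finset.mem_univ _, hC₀⟩⟩
  let mval : (V → Wt) → ℕ := fun ω => (F.image (wt ω)).min' (hF.image _)
  have hm_le : ∀ ω C, C ∈ F → mval ω ≤ wt ω C := fun ω C hC =>
    Finset.min'_le _ _ (Finset.mem_image_of_mem _ hC)
  have hm_ex : ∀ ω, ∃ C ∈ F, wt ω C = mval ω := by
    intro ω
    have := (F.image (wt ω)).min'_mem (hF.image _)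
    obtain ⟨C, hC, hC'⟩ := Finset.mem_image.mp this
    exact ⟨C, hC, hC'⟩
  let Sing : V → (V → Wt) → Prop := fun v ω =>
    (∃ C ∈ F, wt ω C = mval ω ∧ v ∈ C) ∧ (∃ C ∈ F, wt ω C = mval ω ∧ v ∉ C)
  -- Lemma A: bad ω has a singular vertex
  have lemA : ∀ ω : V → Wt, ¬ (∃ W, ∃! C : Finset V, P C ∧ wt ω C = W) →
      ∃ v, Sing v ω := by
    intro ω hbad
    obtain ⟨C, hCF, hCm⟩ := hm_ex ω
    have hPC : P C := (Finset.mem_filter.mp hCF).2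
    by_contra hns
    push_neg at hns
    apply hbad
    refine ⟨mval ω, C, ⟨hPC, hCm⟩, ?_⟩
    intro C' hC'
    by_contra hne
    have hC'F : C' ∈ F := Finset.mem_filter.mpr ⟨Finset.mem_univ _, hC'.1⟩
    have hne' : ¬ (C' ⊆ C ∧ C ⊆ C') := fun h => hne (Finset.Subset.antisymm h.1 h.2)
    rcases not_and_or.mp hne' with h | h
    · obtain ⟨v, hv1, hv2⟩ := Finset.not_subset.mp h
      exact hns v ⟨⟨C', hC'F, hC'.2, hv1⟩, ⟨C, hCF, hCm, hv2⟩⟩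
    · obtain ⟨v, hv1, hv2⟩ := Finset.not_subset.mp h
      exact hns v ⟨⟨C, hCF, hCm, hv1⟩, ⟨C', hC'F, hC'.2, hv2⟩⟩
  -- Lemma B: singular vertex value is determined by the other values
  have lemB : ∀ (v : V) (ω ω' : V → Wt), Sing v ω → Sing v ω' →
      (∀ u, u ≠ v → ω u = ω' u) → ω v = ω' v := by
    intro v ω ω' hs hs' hagree
    obtain ⟨⟨C₁, hC₁F, hC₁m, hv₁⟩, ⟨C₂, hC₂F, hC₂m, hv₂⟩⟩ := hs
    obtain ⟨⟨C₁', hC₁'F, hC₁'m, hv₁'⟩, ⟨C₂', hC₂'F, hC₂'m, hv₂'⟩⟩ := hs'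
    have key : ∀ C : Finset V, v ∉ C → wt ω C = wt ω' C := by
      intro C hvC
      apply Finset.sum_congr rfl
      intro u hu
      exact congrArg Subtype.val (hagree u (fun h => hvC (h ▸ hu)))
    have hm_eq : mval ω = mval ω' := by
      have h1 : mval ω ≤ wt ω C₂' := hm_le ω _ hC₂'F
      rw [key C₂' hv₂', hC₂'m] at h1
      have h2 : mval ω' ≤ wt ω' C₂ := hm_le ω' _ hC₂F
      rw [← key C₂ hv₂, hC₂m] at h2
      omega
    have split : ∀ (ω : V → Wt) (C : Finset V), v ∈ C →
        wt ω C = (ω v : ℕ) + wt ω (C.erase v) := by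
      intro ω C hv
      exact (Finset.add_sum_erase _ _ hv).symm
    have herase1 : wt ω' (C₁.erase v) = wt ω (C₁.erase v) :=
      (key _ (Finset.notMem_erase v C₁)).symm
    have herase2 : wt ω (C₁'.erase v) = wt ω' (C₁'.erase v) :=
      key _ (Finset.notMem_erase v C₁')
    have e1 : (ω v : ℕ) + wt ω (C₁.erase v) = mval ω := by
      rw [← split ω C₁ hv₁]; exact hC₁m
    have e2 : (ω' v : ℕ) + wt ω' (C₁'.erase v) = mval ω' := by
      rw [← split ω' C₁' hv₁']; exact hC₁'m
    have i1 : mval ω' ≤ (ω' v : ℕ) + wt ω (C₁.erase v) := by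
      have := hm_le ω' C₁ hC₁F
      rw [split ω' C₁ hv₁, herase1] at this
      exact this
    have i2 : mval ω ≤ (ω v : ℕ) + wt ω' (C₁'.erase v) := by
      have := hm_le ω C₁' hC₁'F
      rw [split ω C₁' hv₁', herase2] at this
      exact this
    exact Subtype.ext (by omega)
  -- Counting
  let Bad : Finset (V → Wt) :=
    Finset.univ.filter (fun ω => ¬ ∃ W, ∃! C : Finset V, P C ∧ wt ω C = W)
  let S : V → Finset (V → Wt) := fun v => Finset.univ.filter (Sing v)
  have hsub : Bad ⊆ Finset.univ.biUnion S := by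
    intro ω hω
    obtain ⟨v, hv⟩ := lemA ω ((Finset.mem_filter.mp hω).2)
    exact Finset.mem_biUnion.mpr ⟨v, Finset.mem_univ v,
      Finset.mem_filter.mpr ⟨Finset.mem_univ _, hv⟩⟩
  have hScard : ∀ v, (S v).card ≤ (2 * n) ^ (n - 1) := by
    intro v
    have h1 : (S v).card ≤ Fintype.card ({u : V // u ≠ v} → Wt) := by
      rw [← Finset.card_univ]
      apply Finset.card_le_card_of_injOn (fun ω (u : {u : V // u ≠ v}) => ω u.1)
      · intro ω _; exact Finset.mem_univ _
      · intro ω hω ω' hω' h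
        have hagree : ∀ u, u ≠ v → ω u = ω' u := fun u hu => congrFun h ⟨u, hu⟩
        funext u
        by_cases hu : u = v
        · subst hu
          exact lemB u ω ω' ((Finset.mem_filter.mp hω).2)
            ((Finset.mem_filter.mp hω').2) hagree
        · exact hagree u hu
    have h2 : Fintype.card ({u : V // u ≠ v} → Wt) = (2 * n) ^ (n - 1) := by
      rw [Fintype.card_fun, hWtcard]
      congr 1
      have : Fintype.card {u : V // u = v} = 1 := Fintype.card_subtype_eq v
      have := Fintype.card_subtype_compl (p := fun u : V => u = v)
      simp only [Fintype.card_subtype_eq] at this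
      exact this
    omega
  have hBad : Bad.card ≤ n * (2 * n) ^ (n - 1) := by
    calc Bad.card ≤ (Finset.univ.biUnion S).card := Finset.card_le_card hsub
      _ ≤ ∑ v, (S v).card := Finset.card_biUnion_le
      _ ≤ ∑ _v : V, (2 * n) ^ (n - 1) := Finset.sum_le_sum (fun v _ => hScard v)
      _ = n * (2 * n) ^ (n - 1) := by
          rw [Finset.sum_const, Finset.card_univ, smul_eq_mul]
  have htot : (Finset.univ.filter
        (fun ω : V → Wt => ∃ W, ∃! C : Finset V, P C ∧ wt ω C = W)).card
      + Bad.card = (2 * n) ^ n := by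
    rw [Finset.card_filter_add_card_filter_not, Finset.card_univ,
      Fintype.card_fun, hWtcard, hn_def]
  have hcard : Nat.card {ω : V → Wt // ∃ W, ∃! C : Finset V, P C ∧ (∑ v ∈ C, (ω v : ℕ)) = W}
      = (Finset.univ.filter
        (fun ω : V → Wt => ∃ W, ∃! C : Finset V, P C ∧ wt ω C = W)).card := by
    rw [Nat.card_eq_fintype_card, Fintype.card_subtype]
  have hNn : (2 * n) ^ n = 2 * (n * (2 * n) ^ (n - 1)) := by
    have h : n = (n - 1) + 1 := (Nat.sub_add_cancel hn).symm
    calc (2 * n) ^ n = (2 * n) ^ ((n - 1) + 1) := by rw [← h]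
      _ = (2 * n) ^ (n - 1) * (2 * n) := pow_succ _ _
      _ = 2 * (n * (2 * n) ^ (n - 1)) := by ring
  rw [hcard]
  exact final_arith _ _ _ _ htot hBad hNn


/-- `D` is an `r`-dominating set of `G`: every vertex of `G` is within distance `r`
(i.e. joined by a walk of length at most `r`) of some vertex of `D`. -/
def RDominates {V : Type*} (G : SimpleGraph V) (r : ℕ) (D : Finset V) : Prop :=
  ∀ v : V, ∃ d ∈ D, ∃ w : G.Walk v d, w.length ≤ r

/-- If `G` has some connected `r`-dominating set of size `k` containing `ρ`, then at
least half of the weight functions `ω : V → {1, …, 2n}` admit some weight `W` for which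
there is exactly one connected `r`-dominating set of size `k` containing `ρ` of weight
`W`: the number of such functions is at least `(1/2) · (2n)^n`. -/
theorem isolation_for_connected_rdom {V : Type*} [Fintype V] [DecidableEq V]
    (G : SimpleGraph V) (ρ : V) (r k : ℕ) (hr : 1 ≤ r) (hk : 1 ≤ k)
    (hn : 1 ≤ Fintype.card V)
    (hexists : ∃ C : Finset V, ρ ∈ C ∧ C.card = k ∧ RDominates G r C ∧
      (G.induce (↑C : Set V)).Connected) :
    (2 * Fintype.card V) ^ (Fintype.card V) ≤
      2 * Nat.card {ω : V → {m : ℕ // 1 ≤ m ∧ m ≤ 2 * Fintype.card V} //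
        ∃ W : ℕ, ∃! C : Finset V,
          ρ ∈ C ∧ C.card = k ∧ (∑ v ∈ C, (ω v : ℕ)) = W ∧ RDominates G r C ∧
          (G.induce (↑C : Set V)).Connected} := by
  classical
  have h := isolation_aux (fun C : Finset V => ρ ∈ C ∧ C.card = k ∧ RDominates G r C ∧
    (G.induce (↑C : Set V)).Connected) hexists hn
  refine le_trans h ?_
  apply Nat.mul_le_mul_left
  apply le_of_eq
  apply Nat.card_congr
  apply Equiv.subtypeEquivRight
  intro ω
  apply exists_congr
  intro W
  constructor
  · rintro ⟨C, ⟨⟨h1, h2, h3, h4⟩, hw⟩, hu⟩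
    exact ⟨C, ⟨h1, h2, hw, h3, h4⟩,
      fun y hy => hu y ⟨⟨hy.1, hy.2.1, hy.2.2.2.1, hy.2.2.2.2⟩, hy.2.2.1⟩⟩
  · rintro ⟨C, ⟨h1, h2, hw, h3, h4⟩, hu⟩
    exact ⟨C, ⟨⟨h1, h2, h3, h4⟩, hw⟩,
      fun y hy => hu y ⟨hy.1.1, hy.1.2.1, hy.2, hy.1.2.2.1, hy.1.2.2.2⟩⟩
end

section
/- Let r ≥ 1 and M ≥ 0 be natural numbers, let X be a finite set, and let L = {z ∈ ℤ : −r ≤ z ≤ r}. Let f and g be functions from (X → L) × {0, 1, …, M} to ℤ, and define h : (X → L) × ℕ → ℤ by h(c, x) = ∑ f(c_j, x_j)·g(c_k, x_k), where the sum ranges over all pairs of labelings (c_j, c_k) consistent with c and all x_j, x_k ∈ {0, …, M} with x_j + x_k = x + #₀(c). Then for every bar-labeling b : X → L and every x: ∑_{c matching b} h(c, x) = ∑_{x_j + x_k = x + #₀(b), x_j, x_k ∈ {0,…,M}} ( ∑_{c_j matching b} f(c_j, x_j) ) · ( ∑_{c_k matching b} g(c_k, x_k) ). -/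
attribute [local instance] Classical.propDecidable

/-- The label set `L = {z ∈ ℤ : -r ≤ z ≤ r}`. -/
abbrev Lbl (r : ℕ) : Type := ↥(Set.Icc (-(r : ℤ)) (r : ℤ))

/-- A labeling `c` matches a bar-labeling `b` if nonpositive labels agree and
a barred positive label `t` of `b` corresponds to label `t` or `-t` of `c`. -/
def Matches {X : Type*} {r : ℕ} (c b : X → Lbl r) : Prop :=
  ∀ u : X, ((b u : ℤ) ≤ 0 → (c u : ℤ) = (b u : ℤ)) ∧
    (0 < (b u : ℤ) → (c u : ℤ) = (b u : ℤ) ∨ (c u : ℤ) = -(b u : ℤ))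

/-- `(cj, ck)` is consistent with the labeling `c`. -/
def ConsistentPair {X : Type*} {r : ℕ} (cj ck c : X → Lbl r) : Prop :=
  ∀ u : X,
    ((c u : ℤ) = 0 → (cj u : ℤ) = 0 ∧ (ck u : ℤ) = 0) ∧
    ((c u : ℤ) < 0 → (cj u : ℤ) = (c u : ℤ) ∧ (ck u : ℤ) = (c u : ℤ)) ∧
    (0 < (c u : ℤ) →
      ((cj u : ℤ) = (c u : ℤ) ∧ (ck u : ℤ) = -(c u : ℤ)) ∨
      ((cj u : ℤ) = -(c u : ℤ) ∧ (ck u : ℤ) = (c u : ℤ)) ∨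
      ((cj u : ℤ) = (c u : ℤ) ∧ (ck u : ℤ) = (c u : ℤ)))

/-- `#₀(c)`: the number of elements labeled `0` by `c`. -/
noncomputable def countZeros {X : Type*} [Fintype X] {r : ℕ} (c : X → Lbl r) : ℕ :=
  (Finset.univ.filter fun u : X => (c u : ℤ) = 0).card

section Aux
variable {X : Type*} {r : ℕ}

lemma countZeros_eq_of_matches [Fintype X] {c b : X → Lbl r} (h : Matches c b) :
    countZeros c = countZeros b := by
  unfold countZeros
  congr 1
  apply Finset.filter_congr
  intro u _
  obtain ⟨h1, h2⟩ := h u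
  constructor <;> intro hu
  · by_contra hb
    rcases lt_trichotomy (b u : ℤ) 0 with hlt | heq | hgt
    · have := h1 hlt.le; omega
    · exact hb heq
    · have := h2 hgt; omega
  · have := h1 hu.le; omega

lemma matches_of_consistent {cj ck c b : X → Lbl r} (hm : Matches c b)
    (hc : ConsistentPair cj ck c) : Matches cj b ∧ Matches ck b := by
  constructor <;> intro u <;>
  · obtain ⟨h1, h2, h3⟩ := hc u
    obtain ⟨m1, m2⟩ := hm u
    constructor
    · intro hb
      have hcu := m1 hb
      rcases lt_trichotomy (c u : ℤ) 0 with hlt | heq | hgt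
      · have := h2 hlt; omega
      · have := h1 heq; omega
      · omega
    · intro hb
      rcases m2 hb with hc1 | hc1
      · have := h3 (by omega); omega
      · have := h2 (by omega); omega

lemma existsUnique_c {cj ck b : X → Lbl r} (hj : Matches cj b) (hk : Matches ck b) :
    ∃! c : X → Lbl r, Matches c b ∧ ConsistentPair cj ck c := by
  refine ⟨fun u => if (cj u : ℤ) = (ck u : ℤ) then cj u else b u, ⟨?_, ?_⟩, ?_⟩
  · intro u
    obtain ⟨j1, j2⟩ := hj u
    obtain ⟨k1, k2⟩ := hk u
    simp only [apply_ite (fun l : Lbl r => (l : ℤ))]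
    split_ifs with hjk <;> constructor <;> intro hb <;> omega
  · intro u
    obtain ⟨j1, j2⟩ := hj u
    obtain ⟨k1, k2⟩ := hk u
    simp only [apply_ite (fun l : Lbl r => (l : ℤ))]
    split_ifs with hjk <;> refine ⟨?_, ?_, ?_⟩ <;> intro hc <;> omega
  · intro c' ⟨hm', hc'⟩
    funext u
    apply Subtype.ext
    obtain ⟨j1, j2⟩ := hj u
    obtain ⟨k1, k2⟩ := hk u
    obtain ⟨m1, m2⟩ := hm' u
    obtain ⟨a1, a2, a3⟩ := hc' u
    show (c' u : ℤ) = _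
    simp only [apply_ite (fun l : Lbl r => (l : ℤ))]
    split_ifs with hjk
    · rcases lt_trichotomy (c' u : ℤ) 0 with hlt | heq | hgt
      · have := a2 hlt; omega
      · have := a1 heq; omega
      · have := a3 hgt
        rcases lt_trichotomy (b u : ℤ) 0 with hb | hb | hb
        · have := m1 hb.le; omega
        · have := m1 hb.le; omega
        · have := m2 hb; omega
    · rcases lt_trichotomy (c' u : ℤ) 0 with hlt | heq | hgt
      · have := a2 hlt
        rcases lt_trichotomy (b u : ℤ) 0 with hb | hb | hb
        · have := m1 hb.le; omega
        · have := m1 hb.le; omega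
        · have := m2 hb; omega
      · have := a1 heq
        rcases lt_trichotomy (b u : ℤ) 0 with hb | hb | hb
        · have := m1 hb.le; omega
        · have := m1 hb.le; omega
        · have := m2 hb
          have := j2 hb
          have := k2 hb; omega
      · have := a3 hgt
        rcases lt_trichotomy (b u : ℤ) 0 with hb | hb | hb
        · have := m1 hb.le; omega
        · have := m1 hb.le; omega
        · have := m2 hb; omega

lemma sum_unique_c [Fintype X] [DecidableEq X] (b cj ck : X → Lbl r) (z : ℤ) :
    (∑ c : X → Lbl r, if Matches c b ∧ ConsistentPair cj ck c then z else 0)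
      = if Matches cj b ∧ Matches ck b then z else 0 := by
  by_cases H : Matches cj b ∧ Matches ck b
  · obtain ⟨c₀, hc₀, hu⟩ := existsUnique_c H.1 H.2
    rw [if_pos H, Finset.sum_eq_single c₀]
    · rw [if_pos hc₀]
    · intro c _ hne
      rw [if_neg]
      intro hP
      exact hne (hu c hP)
    · intro hmem
      exact absurd (Finset.mem_univ c₀) hmem
  · rw [if_neg H, Finset.sum_eq_zero]
    intro c _
    rw [if_neg]
    intro hP
    exact H (matches_of_consistent hP.1 hP.2)

end Aux

set_option maxHeartbeats 1000000 in
/-- The convolution identity for the bar transform: summing `h(c, x)` over all labelings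
`c` matching a bar-labeling `b` splits as a product of bar-transformed sums of `f` and
`g`. -/
theorem convolution_bar_transform {X : Type*} [Fintype X] [DecidableEq X]
    (r M : ℕ) (hr : 1 ≤ r)
    (f g : (X → Lbl r) → ℕ → ℤ) (h : (X → Lbl r) → ℕ → ℤ)
    (hdef : ∀ (c : X → Lbl r) (x : ℕ),
      h c x =
        ∑ p ∈ (Finset.Iic M ×ˢ Finset.Iic M).filter
            (fun p => p.1 + p.2 = x + countZeros c),
          ∑ cj : X → Lbl r, ∑ ck : X → Lbl r,
            if ConsistentPair cj ck c then f cj p.1 * g ck p.2 else 0) :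
    ∀ (b : X → Lbl r) (x : ℕ),
      (∑ c : X → Lbl r, if Matches c b then h c x else 0) =
        ∑ p ∈ (Finset.Iic M ×ˢ Finset.Iic M).filter
            (fun p => p.1 + p.2 = x + countZeros b),
          (∑ cj : X → Lbl r, if Matches cj b then f cj p.1 else 0) *
          (∑ ck : X → Lbl r, if Matches ck b then g ck p.2 else 0) := by
  intro b x
  have step1 : (∑ c : X → Lbl r, if Matches c b then h c x else 0) =
      ∑ c : X → Lbl r,
        ∑ p ∈ (Finset.Iic M ×ˢ Finset.Iic M).filter
            (fun p => p.1 + p.2 = x + countZeros b),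
          ∑ cj : X → Lbl r, ∑ ck : X → Lbl r,
            if Matches c b ∧ ConsistentPair cj ck c then f cj p.1 * g ck p.2 else 0 := by
    apply Finset.sum_congr rfl
    intro c _
    by_cases hm : Matches c b
    · rw [if_pos hm, hdef c x, countZeros_eq_of_matches hm]
      apply Finset.sum_congr rfl
      intro p _
      apply Finset.sum_congr rfl
      intro cj _
      apply Finset.sum_congr rfl
      intro ck _
      by_cases hc : ConsistentPair cj ck c
      · rw [if_pos hc, if_pos ⟨hm, hc⟩]
      · rw [if_neg hc, if_neg (fun H => hc H.2)]
    · rw [if_neg hm]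
      symm
      apply Finset.sum_eq_zero
      intro p _
      apply Finset.sum_eq_zero
      intro cj _
      apply Finset.sum_eq_zero
      intro ck _
      exact if_neg (fun H => hm H.1)
  rw [step1, Finset.sum_comm]
  apply Finset.sum_congr rfl
  intro p _
  rw [Finset.sum_mul_sum]
  rw [Finset.sum_comm]
  apply Finset.sum_congr rfl
  intro cj _
  rw [Finset.sum_comm]
  apply Finset.sum_congr rfl
  intro ck _
  rw [show (∑ c : X → Lbl r, if Matches c b ∧ ConsistentPair cj ck c then f cj p.1 * g ck p.2 else 0) = if Matches cj b ∧ Matches ck b then f cj p.1 * g ck p.2 else 0 from sum_unique_c b cj ck _]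
  by_cases H : Matches cj b ∧ Matches ck b
  · rw [if_pos H, if_pos H.1, if_pos H.2]
  · rw [if_neg H]
    rcases not_and_or.mp H with H' | H'
    · rw [if_neg H', zero_mul]
    · rw [if_neg H', mul_zero]
end
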